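/- arXiv:2402.18843 — 3 statements merged into one kernel-verified Lean document; each statement's English description precedes it below -/
import Mathlib

section
/- Let α, β ∈ ℝ and let x : [0,∞) → ℝ be a solution of the impulsive differential equation with piecewise constant argument x'(t) = (α−1)·x(⌊t⌋) for t ≠ n, x(n) = β·x(n⁻) for n ∈ ℕ, n ≥ 1, with x(0) = x₀; that is, x is continuous on each interval [n, n+1) with left-hand limit x(n⁻) at each positive integer n, x'(t) = (α−1)·x(n) for all t ∈ (n, n+1) (with one-sided derivative at n), and x(n) = β·x(n⁻). Then for every t ≥ 0, x(t) = (αβ)^⌊t⌋ · (1 + (α−1)(t − ⌊t⌋)) · x₀. -/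
open Filter Topology Set

/-- If `x` solves the IDEPCA `x'(t) = (α-1)·x(⌊t⌋)` for `t ≠ n`,
`x(n) = β·x(n⁻)` for positive integers `n`, `x(0) = x₀`, then
`x(t) = (αβ)^⌊t⌋ · (1 + (α-1)(t-⌊t⌋)) · x₀` for all `t ≥ 0`. -/
theorem idepca_floor_solution_formula
    (α β x₀ : ℝ) (x : ℝ → ℝ) (xl : ℕ → ℝ)
    (hx0 : x 0 = x₀)
    -- continuity on each interval [n, n+1)
    (hcont : ∀ n : ℕ, ContinuousOn x (Set.Ico (n : ℝ) ((n : ℝ) + 1)))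
    -- left-hand limit x(n⁻) = xl n at each positive integer n
    (hlim : ∀ n : ℕ, 1 ≤ n → Tendsto x (𝓝[<] (n : ℝ)) (𝓝 (xl n)))
    -- impulse condition x(n) = β·x(n⁻)
    (hjump : ∀ n : ℕ, 1 ≤ n → x (n : ℝ) = β * xl n)
    -- the differential equation x'(t) = (α-1)·x(⌊t⌋) on each (n, n+1)
    (hderiv : ∀ n : ℕ, ∀ t ∈ Set.Ioo (n : ℝ) ((n : ℝ) + 1),
      HasDerivAt x ((α - 1) * x (n : ℝ)) t)
    -- one-sided (right) derivative at the endpoint t = n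
    (hderiv' : ∀ n : ℕ,
      HasDerivWithinAt x ((α - 1) * x (n : ℝ)) (Set.Ici (n : ℝ)) (n : ℝ)) :
    ∀ t : ℝ, 0 ≤ t →
      x t = (α * β) ^ (⌊t⌋₊) * (1 + (α - 1) * (t - (⌊t⌋₊ : ℝ))) * x₀ := by
  -- Key: on [n, n+1), x t = x n * (1 + (α-1)(t-n))
  have key : ∀ n : ℕ, ∀ t : ℝ, (n : ℝ) ≤ t → t < (n : ℝ) + 1 →
      x t = x n * (1 + (α - 1) * (t - n)) := by
    intro n t hnt ht1
    set g : ℝ → ℝ := fun s => x n * (1 + (α - 1) * (s - n)) with hg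
    have hgderiv : ∀ s : ℝ, HasDerivAt g ((α - 1) * x n) s := by
      intro s
      have : HasDerivAt (fun s : ℝ => x n * (1 + (α - 1) * (s - n)))
          (x n * ((α - 1) * 1)) s := by
        have h1 : HasDerivAt (fun s : ℝ => s - (n : ℝ)) 1 s :=
          (hasDerivAt_id s).sub_const _
        have h2 := ((h1.const_mul (α - 1)).const_add 1).const_mul (x n)
        simpa using h2
      rw [hg]
      convert this using 1
      ring
    have := eq_of_has_deriv_right_eq (a := (n : ℝ)) (b := t)
      (f := x) (g := g) (f' := fun _ => (α - 1) * x n)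
      (fun s hs => by
        rcases eq_or_lt_of_le hs.1 with h | h
        · exact h ▸ hderiv' n
        · exact (hderiv n s ⟨h, hs.2.trans ht1⟩).hasDerivWithinAt)
      (fun s hs => (hgderiv s).hasDerivWithinAt)
      ((hcont n).mono (fun s hs => ⟨hs.1, lt_of_le_of_lt hs.2 ht1⟩))
      (Continuous.continuousOn (by rw [hg]; continuity))
      (by simp [hg])
    exact this t ⟨hnt, le_refl t⟩
  -- value of the left limit at n+1
  have hxl : ∀ n : ℕ, xl (n + 1) = α * x n := by
    intro n
    have h1 : Tendsto x (𝓝[<] ((n : ℝ) + 1)) (𝓝 (α * x n)) := by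
      have h2 : Tendsto (fun t : ℝ => x n * (1 + (α - 1) * (t - n)))
          (𝓝[<] ((n : ℝ) + 1)) (𝓝 (x n * (1 + (α - 1) * (((n : ℝ) + 1) - n)))) := by
        apply Tendsto.mono_left _ nhdsWithin_le_nhds
        exact Continuous.tendsto (by continuity) _
      have heq : (fun t : ℝ => x n * (1 + (α - 1) * (t - n))) =ᶠ[𝓝[<] ((n : ℝ) + 1)] x := by
        filter_upwards [Ioo_mem_nhdsLT_of_mem
          (⟨by linarith [Nat.cast_nonneg (α := ℝ) n], le_refl _⟩ :
            ((n : ℝ) + 1) ∈ Ioc ((n : ℝ)) ((n : ℝ) + 1))] with s hs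
        exact (key n s hs.1.le hs.2).symm
      have := h2.congr' heq
      convert this using 2
      ring
    have h2 := hlim (n + 1) (by omega)
    have : Tendsto x (𝓝[<] (((n : ℕ) + 1 : ℕ) : ℝ)) (𝓝 (xl (n + 1))) := h2
    rw [Nat.cast_add, Nat.cast_one] at this
    exact tendsto_nhds_unique this h1
  -- values at integers
  have hxn : ∀ n : ℕ, x n = (α * β) ^ n * x₀ := by
    intro n
    induction n with
    | zero => simpa using hx0
    | succ n ih =>
      have hj := hjump (n + 1) (by omega)
      rw [Nat.cast_add, Nat.cast_one] at hj ⊢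
      rw [hj, hxl n, ih, pow_succ]
      ring
  intro t ht
  set n := ⌊t⌋₊ with hn
  have h1 : (n : ℝ) ≤ t := Nat.floor_le ht
  have h2 : t < (n : ℝ) + 1 := Nat.lt_floor_add_one t
  rw [key n t h1 h2, hxn n]
  ring
end

section
/- Let α, β ∈ ℝ with 0 < |αβ| < 1, and let x : [0,∞) → ℝ be a solution of x'(t) = (α−1)·x(⌊t⌋) for t ≠ n, x(n) = β·x(n⁻) for n ∈ ℕ, n ≥ 1, with x(0) = x₀. Then |x(t)| ≤ (1 + |α−1|)·|αβ|^⌊t⌋·|x₀| for all t ≥ 0; in particular x(t) → 0 as t → ∞, and the convergence is exponential. -/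
open Filter Topology Set

/-- If `0 < |αβ| < 1` and `x` solves the IDEPCA
`x'(t) = (α-1)·x(⌊t⌋)` for `t ≠ n`, `x(n) = β·x(n⁻)` for positive integers `n`,
`x(0) = x₀`, then `|x(t)| ≤ (1+|α-1|)·|αβ|^⌊t⌋·|x₀|` for all `t ≥ 0`; in particular
`x(t) → 0` as `t → ∞` (the convergence being exponential, as the bound shows). -/
theorem idepca_floor_exponential_decay
    (α β x₀ : ℝ) (habs_pos : 0 < |α * β|) (habs_lt : |α * β| < 1)
    (x : ℝ → ℝ) (xl : ℕ → ℝ)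
    (hx0 : x 0 = x₀)
    -- continuity on each interval [n, n+1)
    (hcont : ∀ n : ℕ, ContinuousOn x (Set.Ico (n : ℝ) ((n : ℝ) + 1)))
    -- left-hand limit x(n⁻) = xl n at each positive integer n
    (hlim : ∀ n : ℕ, 1 ≤ n → Tendsto x (𝓝[<] (n : ℝ)) (𝓝 (xl n)))
    -- impulse condition x(n) = β·x(n⁻)
    (hjump : ∀ n : ℕ, 1 ≤ n → x (n : ℝ) = β * xl n)
    -- the differential equation x'(t) = (α-1)·x(⌊t⌋) on each (n, n+1)
    (hderiv : ∀ n : ℕ, ∀ t ∈ Set.Ioo (n : ℝ) ((n : ℝ) + 1),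
      HasDerivAt x ((α - 1) * x (n : ℝ)) t)
    -- one-sided (right) derivative at the endpoint t = n
    (hderiv' : ∀ n : ℕ,
      HasDerivWithinAt x ((α - 1) * x (n : ℝ)) (Set.Ici (n : ℝ)) (n : ℝ)) :
    (∀ t : ℝ, 0 ≤ t →
      |x t| ≤ (1 + |α - 1|) * |α * β| ^ (⌊t⌋₊) * |x₀|) ∧
    Tendsto x atTop (𝓝 0) := by
  -- explicit formula on each interval
  have hform : ∀ n : ℕ, ∀ t ∈ Set.Ico (n : ℝ) ((n : ℝ) + 1),
      x t = x (n : ℝ) * (1 + (α - 1) * (t - n)) := by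
    intro n t ht
    have key := eq_of_has_deriv_right_eq (a := (n : ℝ)) (b := t)
      (f := x) (g := fun s => x (n : ℝ) * (1 + (α - 1) * (s - n)))
      (f' := fun _ => (α - 1) * x (n : ℝ))
      (fun s hs => by
        rcases eq_or_lt_of_le hs.1 with h | h
        · exact h ▸ hderiv' n
        · exact (hderiv n s ⟨h, hs.2.trans ht.2⟩).hasDerivWithinAt)
      (fun s hs => by
        have : HasDerivAt (fun s => x (n : ℝ) * (1 + (α - 1) * (s - n)))
            ((α - 1) * x (n : ℝ)) s := by
          have h1 : HasDerivAt (fun s : ℝ => 1 + (α - 1) * (s - n)) (α - 1) s := by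
            simpa using (((hasDerivAt_id s).sub_const (n : ℝ)).const_mul (α - 1)).const_add 1
          simpa [mul_comm] using h1.const_mul (x (n : ℝ))
        exact this.hasDerivWithinAt)
      ((hcont n).mono (Set.Icc_subset_Ico_right ht.2))
      (by fun_prop)
      (by simp)
    have := key t ⟨ht.1, le_refl t⟩
    simpa using this
  -- value of the left limit
  have hxl : ∀ n : ℕ, xl (n + 1) = α * x (n : ℝ) := by
    intro n
    have hc : ((n + 1 : ℕ) : ℝ) = (n : ℝ) + 1 := by push_cast; ring
    have hg : Tendsto (fun s => x (n : ℝ) * (1 + (α - 1) * (s - n)))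
        (𝓝[<] ((n : ℝ) + 1)) (𝓝 (α * x (n : ℝ))) := by
      have : ContinuousAt (fun s => x (n : ℝ) * (1 + (α - 1) * (s - n))) ((n : ℝ) + 1) := by
        fun_prop
      have h2 := this.tendsto.mono_left (nhdsWithin_le_nhds (s := Set.Iio ((n : ℝ) + 1)))
      have heq : x (n : ℝ) * (1 + (α - 1) * ((n : ℝ) + 1 - n)) = α * x (n : ℝ) := by ring
      rwa [heq] at h2
    have hx_eq : Tendsto x (𝓝[<] ((n : ℝ) + 1)) (𝓝 (α * x (n : ℝ))) := by
      refine hg.congr' ?_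
      filter_upwards [Ioo_mem_nhdsLT_of_mem (a := (n : ℝ)) (b := (n : ℝ) + 1)
        ⟨by linarith [Nat.cast_nonneg (α := ℝ) n], le_refl _⟩] with s hs
      exact (hform n s ⟨hs.1.le, hs.2⟩).symm
    have hx_lim := hlim (n + 1) (Nat.succ_le_succ (Nat.zero_le n))
    rw [hc] at hx_lim
    exact tendsto_nhds_unique hx_lim hx_eq
  -- values at integers
  have hxn : ∀ n : ℕ, x (n : ℝ) = (α * β) ^ n * x₀ := by
    intro n
    induction n with
    | zero => simpa using hx0
    | succ n ih =>
      have := hjump (n + 1) (Nat.succ_le_succ (Nat.zero_le n))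
      rw [this, hxl n, ih]
      ring
  have habs_nonneg : (0 : ℝ) ≤ |α * β| := abs_nonneg _
  have hbound : ∀ t : ℝ, 0 ≤ t →
      |x t| ≤ (1 + |α - 1|) * |α * β| ^ (⌊t⌋₊) * |x₀| := by
    intro t ht
    set n := ⌊t⌋₊ with hn
    have h1 : (n : ℝ) ≤ t := Nat.floor_le ht
    have h2 : t < (n : ℝ) + 1 := Nat.lt_floor_add_one t
    rw [hform n t ⟨h1, h2⟩, hxn n]
    have h3 : |1 + (α - 1) * (t - n)| ≤ 1 + |α - 1| := by
      calc |1 + (α - 1) * (t - n)| ≤ 1 + |(α - 1) * (t - n)| := by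
            simpa using abs_add_le 1 ((α - 1) * (t - n))
        _ ≤ 1 + |α - 1| := by
            rw [abs_mul]
            have : |t - (n : ℝ)| ≤ 1 := by
              rw [abs_of_nonneg (by linarith)]; linarith
            nlinarith [abs_nonneg (α - 1)]
    rw [abs_mul, abs_mul, abs_pow]
    have hnn : (0 : ℝ) ≤ |α * β| ^ n * |x₀| :=
      mul_nonneg (pow_nonneg habs_nonneg n) (abs_nonneg _)
    calc |α * β| ^ n * |x₀| * |1 + (α - 1) * (t - n)|
        ≤ |α * β| ^ n * |x₀| * (1 + |α - 1|) := by
          exact mul_le_mul_of_nonneg_left h3 hnn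
      _ = (1 + |α - 1|) * |α * β| ^ n * |x₀| := by ring
  refine ⟨hbound, ?_⟩
  have hpow : Tendsto (fun t : ℝ => (1 + |α - 1|) * |α * β| ^ (⌊t⌋₊) * |x₀|)
      atTop (𝓝 0) := by
    have h1 : Tendsto (fun t : ℝ => |α * β| ^ (⌊t⌋₊)) atTop (𝓝 0) :=
      (tendsto_pow_atTop_nhds_zero_of_lt_one habs_nonneg habs_lt).comp
        tendsto_nat_floor_atTop
    simpa using (h1.const_mul (1 + |α - 1|)).mul_const |x₀|
  refine squeeze_zero_norm' ?_ hpow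
  filter_upwards [eventually_ge_atTop (0 : ℝ)] with t ht
  simpa [Real.norm_eq_abs] using hbound t ht
end

section
/- Let a : ℝ → ℝ be continuous and locally integrable and (c_k)_{k∈ℤ} a real sequence with c_k ∉ {0,1} for all k. Let z be a solution of the impulsive differential equation with piecewise constant argument z'(t) = a(t)·(z(t) − z(⌊t⌋)) for t ≠ k, z(k) = c_k·z(k⁻) for k ∈ ℤ, with initial value z(τ) at τ; that is, z is continuous on each [k, k+1) with left-hand limit z(k⁻) at each integer k, satisfies z'(t) = a(t)·(z(t) − z(k)) on each (k, k+1) (with one-sided derivative at k), and z(k) = c_k·z(k⁻). Then for all t ≥ τ, z(t) = (∏_{j=⌊τ⌋+1}^{⌊t⌋} c_j) · z(τ), where the empty product equals 1. -/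
open Filter Topology Set

/-!
On each `[k, k + 1)` the function `z - z k` solves the linear equation `y' = a y` with
`y k = 0`, so the integrating factor `exp (-∫ₖᵗ a)` shows that `z` is constant there.
Hence the left limit at `k + 1` is `z k`, the impulse gives `z (k + 1) = c (k + 1) * z k`,
and iterating this from `⌊τ⌋` to `⌊t⌋` yields the product formula.
-/

theorem eqOn_zero_of_hasDerivWithinAt_smul {E : Type*} [NormedAddCommGroup E] [NormedSpace ℝ E]
    {a : ℝ → ℝ} {y : ℝ → E} {p q : ℝ} (ha : Continuous a) (hy : ContinuousOn y (Icc p q))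
    (hy' : ∀ x ∈ Ico p q, HasDerivWithinAt y (a x • y x) (Ici x) x) (hp : y p = 0) :
    EqOn y 0 (Icc p q) := by
  set A : ℝ → ℝ := fun t => ∫ x in p..t, a x
  have hA : ∀ t, HasDerivAt A (a t) t := fun t =>
    intervalIntegral.integral_hasDerivAt_right (ha.intervalIntegrable _ _)
      (ha.stronglyMeasurableAtFilter _ _) ha.continuousAt
  have hA_cont : Continuous A := continuous_iff_continuousAt.2 fun t => (hA t).continuousAt
  set g : ℝ → E := fun t => Real.exp (-A t) • y t
  have hg_cont : ContinuousOn g (Icc p q) :=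
    (Real.continuous_exp.comp hA_cont.neg).continuousOn.smul hy
  have hg' : ∀ x ∈ Ico p q, HasDerivWithinAt g 0 (Ici x) x := fun x hx => by
    have := ((hA x).neg.exp.hasDerivWithinAt (s := Ici x)).smul (hy' x hx)
    rwa [smul_smul, ← add_smul, mul_neg, add_neg_cancel, zero_smul] at this
  intro s hs
  have hgs : g s = g p := constant_of_has_deriv_right_zero hg_cont hg' s hs
  simpa [g, hp, Real.exp_ne_zero] using hgs

theorem eq_left_of_hasDerivWithinAt_smul_sub {E : Type*} [NormedAddCommGroup E]
    [NormedSpace ℝ E] {a : ℝ → ℝ} {z : ℝ → E} {p q s : ℝ} (ha : Continuous a)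
    (hz : ContinuousOn z (Ico p q))
    (hz' : ∀ x ∈ Ico p q, HasDerivWithinAt z (a x • (z x - z p)) (Ici x) x) (hs : s ∈ Ico p q) :
    z s = z p := by
  have hsub : Icc p s ⊆ Ico p q := Icc_subset_Ico_right hs.2
  have := eqOn_zero_of_hasDerivWithinAt_smul (y := fun x => z x - z p) ha
    ((hz.mono hsub).sub continuousOn_const)
    (fun x hx => (hz' x (Ico_subset_Ico_right hs.2.le hx)).sub_const _) (sub_self _)
    ⟨hs.1, le_rfl⟩
  exact sub_eq_zero.mp this

theorem tendsto_nhdsLT_of_forall_mem_Ico_eq {α : Type*} [TopologicalSpace α] {z : ℝ → α}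
    {p q : ℝ} {b : α} (hpq : p < q) (h : ∀ s ∈ Ico p q, z s = b) :
    Tendsto z (𝓝[<] q) (𝓝 b) :=
  tendsto_const_nhds.congr' <| eventually_of_mem (Ioo_mem_nhdsLT hpq) fun s hs =>
    (h s (Ioo_subset_Ico_self hs)).symm

theorem Int.eq_prod_Icc_mul_of_succ {M : Type*} [CommMonoid M] {f c : ℤ → M}
    (h : ∀ n, f (n + 1) = c (n + 1) * f n) {m n : ℤ} (hmn : m ≤ n) :
    f n = (∏ j ∈ Finset.Icc (m + 1) n, c j) * f m := by
  induction n, hmn using Int.leInduction with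
  | base => simp
  | succ n hmn ih =>
    rw [h, ih, ← Finset.insert_Icc_right_eq_Icc_add_one (by omega),
      Finset.prod_insert (by simp), mul_assoc]

theorem idepca_cooke_yorke_impulsive_solution_general
    (a : ℝ → ℝ) (ha : Continuous a)
    (c : ℤ → ℝ)
    (τ : ℝ) (z : ℝ → ℝ) (zl : ℤ → ℝ)
    -- z is continuous on each interval [k, k+1)
    (hcont : ∀ k : ℤ, ContinuousOn z (Set.Ico (k : ℝ) ((k : ℝ) + 1)))
    -- left-hand limit z(k⁻) = zl k at each integer k
    (hlim : ∀ k : ℤ, Tendsto z (𝓝[<] (k : ℝ)) (𝓝 (zl k)))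
    -- impulse condition z(k) = c_k·z(k⁻)
    (hjump : ∀ k : ℤ, z (k : ℝ) = c k * zl k)
    -- the differential equation z'(t) = a(t)·(z(t) − z(k)) on each (k, k+1)
    (hderiv : ∀ k : ℤ, ∀ t ∈ Set.Ioo (k : ℝ) ((k : ℝ) + 1),
      HasDerivAt z (a t * (z t - z (k : ℝ))) t)
    -- one-sided (right) derivative at the endpoint t = k
    (hderiv' : ∀ k : ℤ,
      HasDerivWithinAt z (a (k : ℝ) * (z (k : ℝ) - z (k : ℝ))) (Set.Ici (k : ℝ)) (k : ℝ)) :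
    ∀ t : ℝ, τ ≤ t →
      z t = (∏ j ∈ Finset.Icc (⌊τ⌋ + 1) ⌊t⌋, c j) * z τ := by
  have hconst : ∀ k : ℤ, ∀ s ∈ Ico (k : ℝ) (k + 1), z s = z k := fun k s hs =>
    eq_left_of_hasDerivWithinAt_smul_sub ha (hcont k) (fun x hx => by
      rcases hx.1.eq_or_lt with rfl | hkx
      · exact hderiv' k
      · exact (hderiv k x ⟨hkx, hx.2⟩).hasDerivWithinAt) hs
  have hfloor (t : ℝ) : z t = z ⌊t⌋ := hconst _ t ⟨Int.floor_le t, Int.lt_floor_add_one t⟩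
  have hstep (k : ℤ) : z ↑(k + 1) = c (k + 1) * z k := by
    have hleft := tendsto_nhdsLT_of_forall_mem_Ico_eq (lt_add_one (k : ℝ)) (hconst k)
    rw [hjump, tendsto_nhds_unique (hlim (k + 1)) (by exact_mod_cast hleft)]
  intro t ht
  rw [hfloor t, hfloor τ, Int.eq_prod_Icc_mul_of_succ (f := fun k : ℤ => z k) hstep (Int.floor_le_floor ht)]

/-- If `z` solves the IDEPCA `z'(t) = a(t)·(z(t) − z(⌊t⌋))` for
`t ≠ k`, `z(k) = c_k·z(k⁻)` for `k ∈ ℤ`, with `c_k ∉ {0,1}`, then for all `t ≥ τ`,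
`z(t) = (∏_{j=⌊τ⌋+1}^{⌊t⌋} c_j) · z(τ)` (empty product = 1). -/
theorem idepca_cooke_yorke_impulsive_solution
    (a : ℝ → ℝ) (ha : Continuous a)
    (haint : MeasureTheory.LocallyIntegrable a MeasureTheory.volume)
    (c : ℤ → ℝ) (hc0 : ∀ k, c k ≠ 0) (hc1 : ∀ k, c k ≠ 1)
    (τ : ℝ) (z : ℝ → ℝ) (zl : ℤ → ℝ)
    -- z is continuous on each interval [k, k+1)
    (hcont : ∀ k : ℤ, ContinuousOn z (Set.Ico (k : ℝ) ((k : ℝ) + 1)))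
    -- left-hand limit z(k⁻) = zl k at each integer k
    (hlim : ∀ k : ℤ, Tendsto z (𝓝[<] (k : ℝ)) (𝓝 (zl k)))
    -- impulse condition z(k) = c_k·z(k⁻)
    (hjump : ∀ k : ℤ, z (k : ℝ) = c k * zl k)
    -- the differential equation z'(t) = a(t)·(z(t) − z(k)) on each (k, k+1)
    (hderiv : ∀ k : ℤ, ∀ t ∈ Set.Ioo (k : ℝ) ((k : ℝ) + 1),
      HasDerivAt z (a t * (z t - z (k : ℝ))) t)
    -- one-sided (right) derivative at the endpoint t = k
    (hderiv' : ∀ k : ℤ,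
      HasDerivWithinAt z (a (k : ℝ) * (z (k : ℝ) - z (k : ℝ))) (Set.Ici (k : ℝ)) (k : ℝ)) :
    ∀ t : ℝ, τ ≤ t →
      z t = (∏ j ∈ Finset.Icc (⌊τ⌋ + 1) ⌊t⌋, c j) * z τ :=
  idepca_cooke_yorke_impulsive_solution_general a ha c τ z zl hcont hlim hjump hderiv hderiv'
end
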